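/- Let μ₀ be a finite measure on a compact metric space X, γ > 0, and μ a probability measure on X. Then (1/γ)·D(μ‖μ₀') = sup over continuous functions u of ( −(1/γ)·log ∫ e^{-γu} dμ₀ − ∫ u dμ ), where D(μ‖μ₀') is the relative entropy of μ with respect to μ₀ (equal to ∫ log(dμ/dμ₀) dμ if μ ≪ μ₀ and +∞ otherwise), interpreted appropriately. -/

import Mathlib

/-!
With `Φ(h) = ∫ h dμ - log ∫ eʰ dμ₀`, the right-hand side is the supremum of `γ⁻¹ Φ(-γu)`.
Gibbs' inequality for `μ` against the tilted probability measure `eʰ μ₀ / ∫ eʰ dμ₀` gives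
`Φ(h) ≤ D(μ‖μ₀)`. Conversely, truncations of the log-density are bounded and nearly attain
`D(μ‖μ₀)`, and a bounded measurable function is a bounded `(μ₀ + μ)`-a.e. limit of continuous
functions, along which `Φ` converges by dominated convergence.
-/

open MeasureTheory Real

open Filter Topology

namespace MeasureTheory

variable {X : Type*} [MeasurableSpace X]

noncomputable def dvFunctional (μ₀ μ : Measure X) (h : X → ℝ) : ℝ :=
  ∫ x, h x ∂μ - log (∫ x, exp (h x) ∂μ₀)

lemma integrable_exp_of_le {ν : Measure X} [IsFiniteMeasure ν] {h : X → ℝ} {M : ℝ}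
    (hh : AEStronglyMeasurable h ν) (hM : ∀ x, h x ≤ M) :
    Integrable (fun x => exp (h x)) ν :=
  .of_bound (continuous_exp.comp_aestronglyMeasurable hh) (exp M) <| ae_of_all _ fun x =>
    (norm_of_nonneg (exp_pos _).le).trans_le (exp_le_exp.2 (hM x))

lemma Measure.AbsolutelyContinuous.neZero {μ ν : Measure X} [NeZero μ] (h : μ ≪ ν) :
    NeZero ν :=
  ⟨fun h0 => NeZero.ne μ (Measure.absolutelyContinuous_zero_iff.1 (h0 ▸ h))⟩

lemma dvFunctional_le_integral_llr {μ₀ μ : Measure X} [IsFiniteMeasure μ₀]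
    [IsProbabilityMeasure μ] (hac : μ ≪ μ₀) (hint : Integrable (llr μ μ₀) μ) {h : X → ℝ}
    (hμ : Integrable h μ) (hμ₀ : Integrable (fun x => exp (h x)) μ₀) :
    dvFunctional μ₀ μ h ≤ ∫ x, llr μ μ₀ x ∂μ := by
  have := hac.neZero
  have := isProbabilityMeasure_tilted hμ₀
  have hgibbs := InformationTheory.integral_llr_add_sub_measure_univ_nonneg
    (hac.trans (absolutelyContinuous_tilted hμ₀)) (integrable_llr_tilted_right hac hμ hint hμ₀)
  rw [integral_llr_tilted_right hac hμ hμ₀ hint, probReal_univ, probReal_univ] at hgibbs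
  rw [dvFunctional]
  linarith

/- Clamping the density rather than its logarithm keeps `exp (truncLog n 0)` small, whereas
`log 0 = 0`. -/
noncomputable def truncLog (n : ℕ) (t : ℝ) : ℝ :=
  log (max (exp (-n)) (min (exp n) t))

lemma abs_truncLog_le (n : ℕ) (t : ℝ) : |truncLog n t| ≤ n := by
  have hlow : exp (-n) ≤ max (exp (-n)) (min (exp n) t) := le_max_left _ _
  have hup : max (exp (-n)) (min (exp n) t) ≤ exp n :=
    max_le (exp_le_exp.2 (by simp)) (min_le_left _ _)
  have hpos := (exp_pos (-n)).trans_le hlow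
  exact abs_le.2 ⟨(le_log_iff_exp_le hpos).2 hlow, (log_le_iff_le_exp hpos).2 hup⟩

lemma exp_truncLog_le (n : ℕ) {t : ℝ} (ht : 0 ≤ t) : exp (truncLog n t) ≤ t + exp (-n) := by
  rw [truncLog, exp_log ((exp_pos _).trans_le (le_max_left _ _))]
  exact max_le (le_add_of_nonneg_left ht)
    ((min_le_right _ _).trans (le_add_of_nonneg_right (exp_pos _).le))

lemma abs_truncLog_le_abs_log (n : ℕ) {t : ℝ} (ht : 0 < t) : |truncLog n t| ≤ |log t| := by
  have hn1 : exp (-n) ≤ 1 := exp_le_one_iff.2 (by simp)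
  have h1n : 1 ≤ exp n := one_le_exp (Nat.cast_nonneg n)
  rw [truncLog]
  rcases le_total t 1 with ht1 | ht1
  · rw [min_eq_right (ht1.trans h1n), abs_of_nonpos (log_nonpos (by positivity) (max_le hn1 ht1)),
      abs_of_nonpos (log_nonpos ht.le ht1)]
    exact neg_le_neg (log_le_log ht (le_max_right _ _))
  · have h1 : 1 ≤ min (exp n) t := le_min h1n ht1
    rw [max_eq_right (hn1.trans h1), abs_of_nonneg (log_nonneg h1),
      abs_of_nonneg (log_nonneg ht1)]
    exact log_le_log (by linarith) (min_le_right _ _)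

lemma eventually_truncLog_eq {t : ℝ} (ht : 0 < t) : ∀ᶠ n in atTop, truncLog n t = log t := by
  have hlow : ∀ᶠ n : ℕ in atTop, exp (-n) ≤ t :=
    (tendsto_exp_neg_atTop_nhds_zero.comp tendsto_natCast_atTop_atTop).eventually
      (eventually_le_nhds ht)
  have hup : ∀ᶠ n : ℕ in atTop, t ≤ exp n :=
    (tendsto_exp_atTop.comp tendsto_natCast_atTop_atTop).eventually_ge_atTop t
  filter_upwards [hlow, hup] with n hl hu
  rw [truncLog, min_eq_right hu, max_eq_right hl]

lemma Measurable.truncLog {f : X → ℝ} (hf : Measurable f) (n : ℕ) :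
    Measurable fun x => truncLog n (f x) :=
  (measurable_const.max (measurable_const.min hf)).log

lemma tendsto_integral_truncLog {μ : Measure X} {f : X → ℝ} (hf : Measurable f)
    (hpos : ∀ᵐ x ∂μ, 0 < f x) (hlog : Integrable (fun x => log (f x)) μ) :
    Tendsto (fun n => ∫ x, truncLog n (f x) ∂μ) atTop (𝓝 (∫ x, log (f x) ∂μ)) := by
  refine tendsto_integral_of_dominated_convergence (fun x => |log (f x)|)
    (fun n => (hf.truncLog n).aestronglyMeasurable) hlog.abs (fun n => ?_) ?_
  · filter_upwards [hpos] with x hx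
    exact abs_truncLog_le_abs_log n hx
  · filter_upwards [hpos] with x hx
    exact tendsto_const_nhds.congr' (EventuallyEq.symm (eventually_truncLog_eq hx))

lemma exists_bounded_lt_dvFunctional {μ₀ μ : Measure X} [IsFiniteMeasure μ₀]
    [IsProbabilityMeasure μ] (hac : μ ≪ μ₀) (hint : Integrable (llr μ μ₀) μ) {c : ℝ}
    (hc : c < ∫ x, llr μ μ₀ x ∂μ) :
    ∃ h : X → ℝ, Measurable h ∧ (∃ M, ∀ x, |h x| ≤ M) ∧ c < dvFunctional μ₀ μ h := by
  have := hac.neZero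
  set f : X → ℝ := fun x => (μ.rnDeriv μ₀ x).toReal
  have hf : Measurable f := (Measure.measurable_rnDeriv μ μ₀).ennreal_toReal
  have hexp_int (n : ℕ) : Integrable (fun x => exp (truncLog n (f x))) μ₀ :=
    integrable_exp_of_le (hf.truncLog n).aestronglyMeasurable
      fun x => (abs_le.1 (abs_truncLog_le n (f x))).2
  have hZ (n : ℕ) : ∫ x, exp (truncLog n (f x)) ∂μ₀ ≤ 1 + exp (-n) * μ₀.real Set.univ :=
    calc ∫ x, exp (truncLog n (f x)) ∂μ₀ ≤ ∫ x, (f x + exp (-n)) ∂μ₀ :=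
          integral_mono (hexp_int n) (Measure.integrable_toReal_rnDeriv.add (integrable_const _))
            fun x => exp_truncLog_le n ENNReal.toReal_nonneg
      _ = 1 + exp (-n) * μ₀.real Set.univ := by
          rw [integral_add Measure.integrable_toReal_rnDeriv (integrable_const _),
            Measure.integral_toReal_rnDeriv hac, probReal_univ, integral_const, smul_eq_mul,
            mul_comm]
  have hlower (n : ℕ) : ∫ x, truncLog n (f x) ∂μ - log (1 + exp (-n) * μ₀.real Set.univ) ≤
      dvFunctional μ₀ μ fun x => truncLog n (f x) :=
    sub_le_sub_left (log_le_log (integral_exp_pos (hexp_int n)) (hZ n)) _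
  have hf_pos : ∀ᵐ x ∂μ, 0 < f x := by
    filter_upwards [Measure.rnDeriv_pos hac, hac.ae_le (Measure.rnDeriv_lt_top μ μ₀)]
      with x h0 htop
    exact ENNReal.toReal_pos h0.ne' htop.ne
  have hlim : Tendsto
      (fun n : ℕ => ∫ x, truncLog n (f x) ∂μ - log (1 + exp (-n) * μ₀.real Set.univ))
      atTop (𝓝 (∫ x, llr μ μ₀ x ∂μ - log (1 + 0 * μ₀.real Set.univ))) :=
    (tendsto_integral_truncLog hf hf_pos hint).sub
      ((((tendsto_exp_neg_atTop_nhds_zero.comp tendsto_natCast_atTop_atTop).mul_const _).const_add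
        1).log (by simp))
  rw [zero_mul, add_zero, log_one, sub_zero] at hlim
  obtain ⟨n, hn⟩ := (hlim.eventually (lt_mem_nhds hc)).exists
  exact ⟨_, hf.truncLog n, ⟨n, fun x => abs_truncLog_le n (f x)⟩, hn.trans_le (hlower n)⟩

lemma tendsto_dvFunctional_of_tendsto_ae {μ₀ μ : Measure X} [IsFiniteMeasure μ₀] [NeZero μ₀]
    [IsFiniteMeasure μ] {u : ℕ → X → ℝ} {h : X → ℝ} {M : ℝ} (hu : ∀ k, Measurable (u k))
    (huM : ∀ k x, |u k x| ≤ M) (hh : Measurable h) (hhM : ∀ x, h x ≤ M)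
    (hlim₀ : ∀ᵐ x ∂μ₀, Tendsto (fun k => u k x) atTop (𝓝 (h x)))
    (hlim : ∀ᵐ x ∂μ, Tendsto (fun k => u k x) atTop (𝓝 (h x))) :
    Tendsto (fun k => dvFunctional μ₀ μ (u k)) atTop (𝓝 (dvFunctional μ₀ μ h)) := by
  have hint : Tendsto (fun k => ∫ x, u k x ∂μ) atTop (𝓝 (∫ x, h x ∂μ)) :=
    tendsto_integral_of_dominated_convergence (fun _ => M)
      (fun k => (hu k).aestronglyMeasurable) (integrable_const M)
      (fun k => ae_of_all _ fun x => huM k x) hlim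
  have hexp : Tendsto (fun k => ∫ x, exp (u k x) ∂μ₀) atTop (𝓝 (∫ x, exp (h x) ∂μ₀)) :=
    tendsto_integral_of_dominated_convergence (fun _ => exp M)
      (fun k => (hu k).exp.aestronglyMeasurable) (integrable_const _)
      (fun k => ae_of_all _ fun x =>
        (norm_of_nonneg (exp_pos _).le).trans_le (exp_le_exp.2 (abs_le.1 (huM k x)).2))
      (hlim₀.mono fun x hx => (continuous_exp.tendsto _).comp hx)
  exact hint.sub (hexp.log (integral_exp_pos
    (integrable_exp_of_le hh.aestronglyMeasurable hhM)).ne')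

lemma exists_seq_continuous_tendsto_ae [TopologicalSpace X] [NormalSpace X] [BorelSpace X]
    (ν : Measure X) [IsFiniteMeasure ν] [ν.WeaklyRegular] {h : X → ℝ} {M : ℝ}
    (hh : Measurable h) (hM : ∀ x, |h x| ≤ M) :
    ∃ u : ℕ → X → ℝ, (∀ k, Continuous (u k)) ∧ (∀ k x, |u k x| ≤ M) ∧
      ∀ᵐ x ∂ν, Tendsto (fun k => u k x) atTop (𝓝 (h x)) := by
  have hL1 : MemLp h 1 ν := .of_bound hh.aestronglyMeasurable M (ae_of_all _ hM)
  choose g hg using fun k : ℕ => hL1.exists_boundedContinuous_eLpNorm_sub_le ENNReal.one_ne_top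
      (ENNReal.inv_ne_zero.2 (ENNReal.natCast_ne_top k))
  have hg_lim : TendstoInMeasure ν (fun k => ⇑(g k)) atTop h := by
    refine tendstoInMeasure_of_tendsto_eLpNorm one_ne_zero
      (fun k => (g k).continuous.aestronglyMeasurable) hh.aestronglyMeasurable ?_
    refine tendsto_of_tendsto_of_tendsto_of_le_of_le tendsto_const_nhds
      ENNReal.tendsto_inv_nat_nhds_zero (fun _ => zero_le) fun k => ?_
    rw [eLpNorm_sub_comm]
    exact (hg k).1
  obtain ⟨ns, -, hns⟩ := hg_lim.exists_seq_tendsto_ae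
  refine ⟨fun k x => max (-M) (min M (g (ns k) x)), fun k => by fun_prop, fun k x => ?_, ?_⟩
  · have hM0 : 0 ≤ M := (abs_nonneg _).trans (hM x)
    exact abs_le.2 ⟨le_max_left _ _, max_le (by linarith) (min_le_left _ _)⟩
  · filter_upwards [hns] with x hx
    have hclamp := tendsto_const_nhds (x := -M) |>.max (tendsto_const_nhds (x := M) |>.min hx)
    rwa [min_eq_right (abs_le.1 (hM x)).2, max_eq_right (abs_le.1 (hM x)).1] at hclamp

lemma exists_continuousMap_lt_dvFunctional [MetricSpace X] [CompactSpace X] [BorelSpace X]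
    {μ₀ μ : Measure X} [IsFiniteMeasure μ₀] [IsProbabilityMeasure μ] (hac : μ ≪ μ₀)
    (hint : Integrable (llr μ μ₀) μ) {c : ℝ} (hc : c < ∫ x, llr μ μ₀ x ∂μ) :
    ∃ u : C(X, ℝ), c < dvFunctional μ₀ μ u := by
  have := hac.neZero
  obtain ⟨h, hh, ⟨M, hM⟩, hch⟩ := exists_bounded_lt_dvFunctional hac hint hc
  obtain ⟨u, hu, huM, hlim⟩ := exists_seq_continuous_tendsto_ae (μ₀ + μ) hh hM
  rw [ae_add_measure_iff] at hlim
  have hconv := tendsto_dvFunctional_of_tendsto_ae (fun k => (hu k).measurable) huM hh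
    (fun x => (abs_le.1 (hM x)).2) hlim.1 hlim.2
  obtain ⟨k, hk⟩ := (hconv.eventually (lt_mem_nhds hch)).exists
  exact ⟨⟨u k, hu k⟩, hk⟩

end MeasureTheory

/-- Donsker–Varadhan variational formula (scaled by `1/γ`): for a probability measure `μ`
absolutely continuous with respect to a finite measure `μ₀` on a compact metric space,
`(1/γ) D(μ‖μ₀) = sup_{u ∈ C(X,ℝ)} ( -(1/γ) log ∫ e^{-γ u} dμ₀ - ∫ u dμ )`. -/
theorem donsker_varadhan_entropy
    {X : Type*} [MetricSpace X] [CompactSpace X] [MeasurableSpace X] [BorelSpace X]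
    (μ₀ : Measure X) [IsFiniteMeasure μ₀] (μ : Measure X) [IsProbabilityMeasure μ]
    (γ : ℝ) (hγ : 0 < γ)
    (hac : μ ≪ μ₀)
    (hint : Integrable (fun x => Real.log (μ.rnDeriv μ₀ x).toReal) μ) :
    (1 / γ) * ∫ x, Real.log (μ.rnDeriv μ₀ x).toReal ∂μ =
      ⨆ u : C(X, ℝ),
        (-(1 / γ) * Real.log (∫ x, Real.exp (-γ * u x) ∂μ₀) - ∫ x, u x ∂μ) := by
  have hF : ∀ u : C(X, ℝ), -(1 / γ) * log (∫ x, exp (-γ * u x) ∂μ₀) - ∫ x, u x ∂μ =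
      γ⁻¹ * dvFunctional μ₀ μ (fun x => -γ * u x) := fun u => by
    rw [dvFunctional, integral_const_mul]
    field_simp
    ring
  refine (ciSup_eq_of_forall_le_of_forall_lt_exists_gt (fun u => ?_) fun w hw => ?_).symm
  · rw [hF, one_div]
    gcongr
    exact dvFunctional_le_integral_llr hac hint
      ((u.continuous.integrable_of_hasCompactSupport (.of_compactSpace _)).const_mul _)
      ((by fun_prop : Continuous fun x => exp (-γ * u x)).integrable_of_hasCompactSupport
        (.of_compactSpace _))
  · obtain ⟨u, hu⟩ := exists_continuousMap_lt_dvFunctional hac hint (c := γ * w)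
      (by rwa [one_div, lt_inv_mul_iff₀ hγ] at hw)
    refine ⟨(-γ⁻¹) • u, ?_⟩
    have hscale : (fun x => -γ * ((-γ⁻¹) • u) x) = u := by
      ext x
      simp [hγ.ne']
    rwa [hF, hscale, lt_inv_mul_iff₀ hγ]
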